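/- Let m ≥ 1, let O ⊆ ℝ^m be a nonempty open convex set, let ω : O → ℝ be convex and differentiable, let X ⊆ O be a nonempty compact convex set, and let α > 0 satisfy ω(x) − ω(y) − ⟨∇ω(y), x − y⟩ ≥ (α/2)‖x − y‖² for all x, y ∈ X. Let x ∈ X, E ∈ ℝ^m, t > 0, and suppose x⁺ ∈ X minimizes u ↦ ⟨tE − ∇ω(x), u⟩ + ω(u) over X. Then for every u ∈ X: t⟨E, x − u⟩ ≤ D_ω(u, x) − D_ω(u, x⁺) + t²‖E‖²/(2α). -/

import Mathlib

open scoped RealInnerProductSpace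

/-- The Bregman distance associated to a differentiable function `ω`. -/
noncomputable def bregman {m : ℕ} (ω : EuclideanSpace ℝ (Fin m) → ℝ)
    (u v : EuclideanSpace ℝ (Fin m)) : ℝ :=
  ω u - ω v - ⟪gradient ω v, u - v⟫

/-!
First-order optimality of `xp` gives `0 ≤ ⟪t • E - ∇ω x + ∇ω xp, u - xp⟫`. The three-point
identity for Bregman distances turns this into
`D(u, x) - D(u, xp) ≥ D(xp, x) + t ⟪E, xp - u⟫`, and strong convexity `D(xp, x) ≥ α/2 ‖xp - x‖²`
absorbs the remaining term `t ⟪E, x - xp⟫` by Young's inequality.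
-/

section InnerProductSpace

variable {F : Type*} [NormedAddCommGroup F] [InnerProductSpace ℝ F]

theorem real_inner_le_half_mul_norm_sq_add_norm_sq_div {α : ℝ} (hα : 0 < α) (a b : F) :
    ⟪a, b⟫ ≤ α / 2 * ‖b‖ ^ 2 + ‖a‖ ^ 2 / (2 * α) := by
  have h := norm_sub_sq_real a (α • b)
  rw [real_inner_smul_right, norm_smul, Real.norm_of_nonneg hα.le] at h
  rw [← sub_nonneg]
  have : α / 2 * ‖b‖ ^ 2 + ‖a‖ ^ 2 / (2 * α) - ⟪a, b⟫ = ‖a - α • b‖ ^ 2 / (2 * α) := by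
    rw [h]; field_simp; ring
  rw [this]
  positivity

variable [CompleteSpace F]

theorem IsMinOn.inner_add_gradient_nonneg {ω : F → ℝ} {s : Set F} {c a b : F}
    (hmin : IsMinOn (fun u => ⟪c, u⟫ + ω u) s a) (hs : Convex ℝ s) (ha : a ∈ s) (hb : b ∈ s)
    (hω : DifferentiableAt ℝ ω a) :
    0 ≤ ⟪c + gradient ω a, b - a⟫ := by
  have hderiv : HasFDerivAt (fun u => ⟪c, u⟫ + ω u)
      (innerSL ℝ c + InnerProductSpace.toDual ℝ F (gradient ω a)) a :=
    (innerSL ℝ c).hasFDerivAt.add hω.hasGradientAt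
  simpa [inner_add_left] using hmin.localize.hasFDerivWithinAt_nonneg
    hderiv.hasFDerivWithinAt (sub_mem_posTangentConeAt_of_segment_subset (hs.segment_subset ha hb))

end InnerProductSpace

theorem bregman_sub_bregman {m : ℕ} (ω : EuclideanSpace ℝ (Fin m) → ℝ)
    (u x y : EuclideanSpace ℝ (Fin m)) :
    bregman ω u x - bregman ω u y = bregman ω y x + ⟪gradient ω y - gradient ω x, u - y⟫ := by
  simp only [bregman, inner_sub_left, inner_sub_right]
  ring

theorem comirror_single_step_general {m : ℕ}
    (O : Set (EuclideanSpace ℝ (Fin m)))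
    (ω : EuclideanSpace ℝ (Fin m) → ℝ)
    (hωdiff : ∀ x ∈ O, DifferentiableAt ℝ ω x)
    (X : Set (EuclideanSpace ℝ (Fin m)))
    (hXconv : Convex ℝ X) (hXO : X ⊆ O)
    (α : ℝ) (hα : 0 < α)
    (hstrong : ∀ x ∈ X, ∀ y ∈ X,
      ω x - ω y - ⟪gradient ω y, x - y⟫ ≥ α / 2 * ‖x - y‖ ^ 2)
    (x : EuclideanSpace ℝ (Fin m)) (hx : x ∈ X)
    (E : EuclideanSpace ℝ (Fin m)) (t : ℝ)
    (xp : EuclideanSpace ℝ (Fin m)) (hxp : xp ∈ X)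
    (hmin : ∀ u ∈ X,
      ⟪t • E - gradient ω x, xp⟫ + ω xp ≤ ⟪t • E - gradient ω x, u⟫ + ω u) :
    ∀ u ∈ X, t * ⟪E, x - u⟫ ≤
      bregman ω u x - bregman ω u xp + t ^ 2 * ‖E‖ ^ 2 / (2 * α) := by
  intro u hu
  have hopt : 0 ≤ ⟪t • E - gradient ω x + gradient ω xp, u - xp⟫ :=
    IsMinOn.inner_add_gradient_nonneg hmin hXconv hxp hu (hωdiff xp (hXO hxp))
  have hyoung := real_inner_le_half_mul_norm_sq_add_norm_sq_div hα (t • E) (x - xp)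
  rw [norm_smul, mul_pow, Real.norm_eq_abs, sq_abs, norm_sub_rev] at hyoung
  have hstrong_xp : α / 2 * ‖xp - x‖ ^ 2 ≤ bregman ω xp x := hstrong xp hxp x hx
  calc t * ⟪E, x - u⟫
      = ⟪t • E, x - xp⟫ - ⟪t • E - gradient ω x + gradient ω xp, u - xp⟫
          + ⟪gradient ω xp - gradient ω x, u - xp⟫ := by
        simp only [inner_sub_left, inner_add_left, inner_sub_right, real_inner_smul_left]
        ring
    _ ≤ bregman ω xp x + ⟪gradient ω xp - gradient ω x, u - xp⟫ + t ^ 2 * ‖E‖ ^ 2 / (2 * α) := by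
        linarith
    _ = bregman ω u x - bregman ω u xp + t ^ 2 * ‖E‖ ^ 2 / (2 * α) := by
        rw [bregman_sub_bregman]

theorem comirror_single_step {m : ℕ} (hm : 1 ≤ m)
    (O : Set (EuclideanSpace ℝ (Fin m))) (hOne : O.Nonempty) (hOopen : IsOpen O)
    (hOconv : Convex ℝ O)
    (ω : EuclideanSpace ℝ (Fin m) → ℝ) (hωconv : ConvexOn ℝ O ω)
    (hωdiff : ∀ x ∈ O, DifferentiableAt ℝ ω x)
    (X : Set (EuclideanSpace ℝ (Fin m))) (hXne : X.Nonempty) (hXcpt : IsCompact X)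
    (hXconv : Convex ℝ X) (hXO : X ⊆ O)
    (α : ℝ) (hα : 0 < α)
    (hstrong : ∀ x ∈ X, ∀ y ∈ X,
      ω x - ω y - ⟪gradient ω y, x - y⟫ ≥ α / 2 * ‖x - y‖ ^ 2)
    (x : EuclideanSpace ℝ (Fin m)) (hx : x ∈ X)
    (E : EuclideanSpace ℝ (Fin m)) (t : ℝ) (ht : 0 < t)
    (xp : EuclideanSpace ℝ (Fin m)) (hxp : xp ∈ X)
    (hmin : ∀ u ∈ X,
      ⟪t • E - gradient ω x, xp⟫ + ω xp ≤ ⟪t • E - gradient ω x, u⟫ + ω u) :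
    ∀ u ∈ X, t * ⟪E, x - u⟫ ≤
      bregman ω u x - bregman ω u xp + t ^ 2 * ‖E‖ ^ 2 / (2 * α) :=
  comirror_single_step_general O ω hωdiff X hXconv hXO α hα hstrong x hx E t xp hxp hmin
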